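/- arXiv:2207.06504 — 6 statements merged into one kernel-verified Lean document; each statement's English description precedes it below -/
import Mathlib

section
/- Let g be an aligned history-dependent game with reference static game ĝ, and let P be a local and monotone asynchronous learning rule. Then for every finite history α and every a ∈ A with a ≤ α^T componentwise, there exists a monotone coupling of the one-step transition distributions P̂^a and P^α, i.e., a probability measure ℙ on A × A with ℙ(x,y) = 0 unless x ≤ y, Σ_{x: x ≤ y'} ℙ(x,y') = P^α(y') for every y' ∈ A, and Σ_{y: y ≥ x'} ℙ(x',y) = P̂^a(x') for every x' ∈ A. -/
open scoped Classical
open Finset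

abbrev Profile (n : ℕ) := Fin n → Bool
abbrev UtilProfile (n : ℕ) := Fin n → Profile n → ℝ
abbrev Rule (n : ℕ) := Profile n → Profile n → UtilProfile n → ℝ

/-- `P` is an individual learning rule for agent `i`: it maps into `[0,1]`, is a
probability measure over next profiles, and only agent `i` may change its action. -/
def IsIndividual {n : ℕ} (i : Fin n) (P : Rule n) : Prop :=
  (∀ (a : Profile n) (U : UtilProfile n), ∑ b : Profile n, P a b U = 1) ∧
  (∀ (a b : Profile n) (U : UtilProfile n), 0 ≤ P a b U ∧ P a b U ≤ 1) ∧
  (∀ (a b : Profile n) (U : UtilProfile n), (∃ j, j ≠ i ∧ a j ≠ b j) → P a b U = 0)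

/-- `P` is local: the transition probability only depends on the selected action of `i`
and the pair of payoffs `(U_i(0,a_{-i}), U_i(1,a_{-i}))`. -/
def IsLocalRule {n : ℕ} (i : Fin n) (P : Rule n) : Prop :=
  ∃ Pbar : Bool → ℝ × ℝ → ℝ,
    ∀ (a : Profile n) (b : Bool) (U : UtilProfile n),
      P a (Function.update a i b) U
        = Pbar b (U i (Function.update a i false), U i (Function.update a i true))

/-- The utility profile obtained from `U` by adding `l` to agent `i`'s utility on
profiles where `i` plays `b`. -/
def bump {n : ℕ} (i : Fin n) (U : UtilProfile n) (b : Bool) (l : ℝ) : UtilProfile n :=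
  Function.update U i (fun x => if x i = b then U i x + l else U i x)

/-- `P` is monotone with respect to utility. -/
def IsMonotoneRule {n : ℕ} (i : Fin n) (P : Rule n) : Prop :=
  ∀ (U : UtilProfile n) (b : Bool) (l : ℝ), 0 ≤ l → ∀ a : Profile n,
    P a (Function.update a i b) U ≤ P a (Function.update a i b) (bump i U b l)

/-- The asynchronous learning rule built from individual learning rules. -/
noncomputable def asyncRule {n : ℕ} (Pvec : Fin n → Rule n) : Rule n :=
  fun a b U => (1 / (n : ℝ)) * ∑ i : Fin n, Pvec i a b U

/-- A finite (nonempty) history of action profiles; `⟨T, α⟩` has length `T+1`. -/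
abbrev Hist (n : ℕ) := Σ T : ℕ, (Fin (T + 1) → Profile n)

/-- The last action profile of a history. -/
def lastProf {n : ℕ} (h : Hist n) : Profile n := h.2 (Fin.last h.1)

/-- `Uh` is an aligned history-dependent game with reference static game `Uhat`. -/
def Aligned {n : ℕ} (Uh : Hist n → UtilProfile n) (Uhat : UtilProfile n) : Prop :=
  ∀ (h : Hist n) (a : Profile n) (i : Fin n),
    (∀ j, j ≠ i → a j ≤ lastProf h j) →
    Uhat i (Function.update a i true) ≤ Uh h i (Function.update (lastProf h) i true) ∧
    Uh h i (Function.update (lastProf h) i false) ≤ Uhat i (Function.update a i false)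

/-- A monotone coupling of the probability measures `p1` (lower) and `p2` (upper). -/
def IsMonotoneCoupling {X : Type*} [Fintype X] [PartialOrder X]
    (p1 p2 : X → ℝ) (p : X → X → ℝ) : Prop :=
  (∀ x y, 0 ≤ p x y) ∧
  (∑ x : X, ∑ y : X, p x y) = 1 ∧
  (∀ x y, ¬ x ≤ y → p x y = 0) ∧
  (∀ y, ∑ x ∈ Finset.univ.filter (fun x => x ≤ y), p x y = p2 y) ∧
  (∀ x, ∑ y ∈ Finset.univ.filter (fun y => x ≤ y), p x y = p1 x)

/-!
Couple the two transitions agent by agent. Agent `i`'s rule only moves coordinate `i`, so from `a`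
and from `α^T` it lands on the lines `update a i ·` and `update α^T i ·`, and its law there is a
law on `Bool`. Locality and monotonicity make `P_i(· → 1)` increasing in the payoff of `1` and
decreasing in the payoff of `0`, so alignment gives `P̂_i(a → 1) ≤ P_i(α^T → 1)`: the two laws on
`Bool` are stochastically ordered and have a monotone coupling. Pushed to the two lines it stays
monotone because `a ≤ α^T`, and the uniform mixture over agents of these couplings couples the
asynchronous transitions.
-/

section MonotoneCoupling

variable {X Y : Type*} [Fintype X] [PartialOrder X] [Fintype Y] [PartialOrder Y]

theorem isMonotoneCoupling_iff_sum {p1 p2 : X → ℝ} {p : X → X → ℝ} :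
    IsMonotoneCoupling p1 p2 p ↔
      (∀ x y, 0 ≤ p x y) ∧ (∑ x, ∑ y, p x y) = 1 ∧ (∀ x y, ¬ x ≤ y → p x y = 0) ∧
        (∀ y, ∑ x, p x y = p2 y) ∧ (∀ x, ∑ y, p x y = p1 x) := by
  refine and_congr_right fun _ => and_congr_right fun _ => and_congr_right fun hle => ?_
  have hfst (y : X) : ∑ x ∈ univ.filter (· ≤ y), p x y = ∑ x, p x y :=
    sum_filter_of_ne fun x _ hx => not_not.mp fun h => hx (hle x y h)
  have hsnd (x : X) : ∑ y ∈ univ.filter (x ≤ ·), p x y = ∑ y, p x y :=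
    sum_filter_of_ne fun y _ hy => not_not.mp fun h => hy (hle x y h)
  simp only [hfst, hsnd]

namespace IsMonotoneCoupling

theorem map [DecidableEq Y] {p1 p2 : X → ℝ} {p : X → X → ℝ} (hp : IsMonotoneCoupling p1 p2 p)
    (f g : X → Y) (hfg : ∀ x x', x ≤ x' → f x ≤ g x') :
    IsMonotoneCoupling (fun y => ∑ x, if f x = y then p1 x else 0)
      (fun y' => ∑ x', if g x' = y' then p2 x' else 0)
      (fun y y' => ∑ x, ∑ x', if f x = y ∧ g x' = y' then p x x' else 0) := by
  obtain ⟨h0, hmass, hle, h2, h1⟩ := isMonotoneCoupling_iff_sum.mp hp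
  refine isMonotoneCoupling_iff_sum.mpr
    ⟨fun y y' => ?_, ?_, fun y y' hyy' => ?_, fun y' => ?_, fun y => ?_⟩
  · exact sum_nonneg fun x _ => sum_nonneg fun x' _ => by split <;> simp [h0]
  · rw [← hmass, sum_comm]
    simp_rw [sum_comm (s := (univ : Finset Y)) (t := (univ : Finset X))]
    simp [ite_and]
  · refine sum_eq_zero fun x _ => sum_eq_zero fun x' _ => ?_
    split
    case isTrue h => exact hle x x' fun hxx' => hyy' (h.1 ▸ h.2 ▸ hfg x x' hxx')
    case isFalse => rfl
  · simp_rw [← h2]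
    rw [sum_comm]
    simp only [ite_and, sum_ite_irrel, sum_const_zero, sum_ite_eq, mem_univ, ↓reduceIte]
    rw [sum_comm]
    simp
  · simp_rw [← h1]
    rw [sum_comm]
    simp [ite_and, sum_comm (s := (univ : Finset Y))]

theorem convex_sum {ι : Type*} [Fintype ι] {w : ι → ℝ} (hw0 : ∀ i, 0 ≤ w i)
    (hw1 : ∑ i, w i = 1) {p1 p2 : ι → X → ℝ} {p : ι → X → X → ℝ}
    (hp : ∀ i, IsMonotoneCoupling (p1 i) (p2 i) (p i)) :
    IsMonotoneCoupling (fun x => ∑ i, w i * p1 i x) (fun y => ∑ i, w i * p2 i y)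
      (fun x y => ∑ i, w i * p i x y) := by
  choose h0 hmass hle h2 h1 using fun i => isMonotoneCoupling_iff_sum.mp (hp i)
  refine isMonotoneCoupling_iff_sum.mpr
    ⟨fun x y => ?_, ?_, fun x y hxy => ?_, fun y => ?_, fun x => ?_⟩
  · exact sum_nonneg fun i _ => mul_nonneg (hw0 i) (h0 i x y)
  · rw [sum_congr rfl fun x _ => sum_comm, sum_comm]
    simp_rw [← mul_sum, hmass, mul_one, hw1]
  · exact sum_eq_zero fun i _ => by rw [hle i x y hxy, mul_zero]
  · rw [sum_comm]
    simp_rw [← mul_sum, h2]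
  · rw [sum_comm]
    simp_rw [← mul_sum, h1]

end IsMonotoneCoupling

end MonotoneCoupling

theorem exists_isMonotoneCoupling_bool {q r : Bool → ℝ} (hq : 0 ≤ q true) (hr : 0 ≤ r false)
    (hq1 : q false + q true = 1) (hr1 : r false + r true = 1) (hqr : q true ≤ r true) :
    ∃ m, IsMonotoneCoupling q r m := by
  refine ⟨fun x y => if x then (if y then q true else 0)
      else (if y then r true - q true else r false),
    isMonotoneCoupling_iff_sum.mpr ⟨?_, ?_, ?_, ?_, ?_⟩⟩
  · intro x y
    cases x <;> cases y <;> simp [hq, hr, hqr]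
  · simp
    linarith
  · intro x y hxy
    cases x <;> cases y <;> simp at hxy ⊢
  · intro y
    cases y <;> simp
  · rintro (_ | _)
    · simp
      linarith
    · simp

namespace IsIndividual

variable {n : ℕ} {i : Fin n} {P : Rule n}

theorem apply_eq_sum_update (hP : IsIndividual i P) (c x : Profile n) (U : UtilProfile n) :
    P c x U = ∑ b, if Function.update c i b = x then P c (Function.update c i b) U else 0 := by
  by_cases hx : ∃ b, Function.update c i b = x
  · obtain ⟨b, rfl⟩ := hx
    rw [sum_eq_single b (fun b' _ hb' => if_neg ((Function.update_injective c i).ne hb'))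
      (by simp), if_pos rfl]
  · rw [sum_eq_zero fun b _ => if_neg (not_exists.mp hx b)]
    refine hP.2.2 c x U ?_
    have hne : Function.update c i (x i) ≠ x := not_exists.mp hx (x i)
    simp only [ne_eq, Function.update_eq_iff, true_and, not_forall] at hne
    obtain ⟨j, hj, hcx⟩ := hne
    exact ⟨j, hj, hcx⟩

theorem apply_update_false_add_apply_update_true (hP : IsIndividual i P) (c : Profile n)
    (U : UtilProfile n) :
    P c (Function.update c i false) U + P c (Function.update c i true) U = 1 := by
  have h := hP.1 c U
  rw [sum_congr rfl fun x _ => hP.apply_eq_sum_update c x U, sum_comm] at h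
  simpa [Fintype.sum_bool, add_comm] using h

end IsIndividual

theorem IsLocalRule.apply_update_true_le {n : ℕ} {i : Fin n} {P : Rule n} (hL : IsLocalRule i P)
    (hI : IsIndividual i P) (hM : IsMonotoneRule i P) {c d : Profile n} {U V : UtilProfile n}
    (h1 : U i (Function.update c i true) ≤ V i (Function.update d i true))
    (h0 : V i (Function.update d i false) ≤ U i (Function.update c i false)) :
    P c (Function.update c i true) U ≤ P d (Function.update d i true) V := by
  obtain ⟨F, hF⟩ := hL
  -- Every payoff pair `(u₀, u₁)` is realised by `W u₀ u₁`, so `F` inherits the properties of `P`.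
  let W (u₀ u₁ : ℝ) : UtilProfile n := fun _ x => if x i then u₁ else u₀
  have hsum (u₀ u₁ : ℝ) : F false (u₀, u₁) + F true (u₀, u₁) = 1 := by
    simpa [hF, W] using hI.apply_update_false_add_apply_update_true c (W u₀ u₁)
  have hmono_true (u₀ u₁ v₁ : ℝ) (h : u₁ ≤ v₁) : F true (u₀, u₁) ≤ F true (u₀, v₁) := by
    simpa [hF, W, bump] using hM (W u₀ u₁) true (v₁ - u₁) (sub_nonneg.mpr h) c
  have hmono_false (u₀ v₀ u₁ : ℝ) (h : u₀ ≤ v₀) : F false (u₀, u₁) ≤ F false (v₀, u₁) := by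
    simpa [hF, W, bump] using hM (W u₀ u₁) false (v₀ - u₀) (sub_nonneg.mpr h) c
  rw [hF c true U, hF d true V]
  set u₀ := U i (Function.update c i false)
  set v₀ := V i (Function.update d i false)
  set v₁ := V i (Function.update d i true)
  calc F true (u₀, _) ≤ F true (u₀, v₁) := hmono_true _ _ _ h1
    _ = 1 - F false (u₀, v₁) := by linarith [hsum u₀ v₁]
    _ ≤ 1 - F false (v₀, v₁) := by linarith [hmono_false _ _ v₁ h0]
    _ = F true (v₀, v₁) := by linarith [hsum v₀ v₁]

/-- For an aligned history-dependent game with a local and monotone asynchronous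
learning rule, a monotone coupling exists between the one-step transition measures
`P̂^a` and `P^α` whenever `a ≤ α^T`. -/
theorem one_step_monotone_coupling (n : ℕ) (hn : 1 ≤ n) (Pvec : Fin n → Rule n)
    (hP : ∀ i, IsIndividual i (Pvec i) ∧ IsLocalRule i (Pvec i) ∧ IsMonotoneRule i (Pvec i))
    (Uh : Hist n → UtilProfile n) (Uhat : UtilProfile n) (hA : Aligned Uh Uhat)
    (h : Hist n) (a : Profile n) (ha : a ≤ lastProf h) :
    ∃ p : Profile n → Profile n → ℝ,
      IsMonotoneCoupling (fun x => asyncRule Pvec a x Uhat)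
        (fun y => asyncRule Pvec (lastProf h) y (Uh h)) p := by
  set α := lastProf h
  have hagent (i : Fin n) : ∃ m, IsMonotoneCoupling (fun x => Pvec i a x Uhat)
      (fun y => Pvec i α y (Uh h)) m := by
    obtain ⟨hI, hL, hM⟩ := hP i
    obtain ⟨h1, h0⟩ := hA h a i fun j _ => ha j
    obtain ⟨m, hm⟩ := exists_isMonotoneCoupling_bool
      (q := fun b => Pvec i a (Function.update a i b) Uhat)
      (r := fun b => Pvec i α (Function.update α i b) (Uh h)) (hI.2.1 _ _ _).1 (hI.2.1 _ _ _).1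
      (hI.apply_update_false_add_apply_update_true a Uhat)
      (hI.apply_update_false_add_apply_update_true α (Uh h)) (hL.apply_update_true_le hI hM h1 h0)
    have hmap := hm.map (Function.update a i) (Function.update α i) fun b b' hbb' =>
      update_le_update_iff.mpr ⟨hbb', fun j _ => ha j⟩
    rw [funext (hI.apply_eq_sum_update a · Uhat), funext (hI.apply_eq_sum_update α · (Uh h))]
    exact ⟨_, hmap⟩
  choose m hm using hagent
  have hn0 : (n : ℝ) ≠ 0 := Nat.cast_ne_zero.mpr (by omega)
  have hasync (c : Profile n) (U : UtilProfile n) :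
      (fun x => asyncRule Pvec c x U) = fun x => ∑ i, 1 / (n : ℝ) * Pvec i c x U := by
    funext x
    simp [asyncRule, mul_sum]
  rw [hasync, hasync]
  exact ⟨_, IsMonotoneCoupling.convex_sum (fun _ => by positivity) (by simp [hn0]) hm⟩
end

section
/- Let g be an aligned history-dependent game with reference static game ĝ, let P be a local and monotone asynchronous learning rule, let π be a probability distribution on A, and let T ≥ 1. Then there exists a monotone coupling of the path measures P̂_π and P_π on A_T = A^T (ordered componentwise), i.e., a probability measure ℙ on A_T × A_T with ℙ(α,ᾱ) = 0 unless α ≤ ᾱ, Σ_{α: α ≤ ᾱ'} ℙ(α,ᾱ') = P_π(ᾱ') for every ᾱ', and Σ_{ᾱ: ᾱ ≥ α'} ℙ(α',ᾱ) = P̂_π(α') for every α'. -/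
open scoped Classical
open Finset

/-- The prefix `α^{≤t}` of a path `α` (a history of length `t+1`). -/
def prefixHist {n T : ℕ} (α : Fin (T + 1) → Profile n) (t : Fin T) : Hist n :=
  ⟨t.1, fun s => α (Fin.castLE (Nat.succ_le_succ t.isLt.le) s)⟩

/-- The path measure of the history-dependent game:
`P_π(α) = π(α¹) ∏_t P^{α^{≤t}}(α^{t+1})`. -/
noncomputable def pathHist {n : ℕ} (P : Rule n) (Uh : Hist n → UtilProfile n)
    (π : Profile n → ℝ) (T : ℕ) (α : Fin (T + 1) → Profile n) : ℝ :=
  π (α 0) * ∏ t : Fin T, P (α t.castSucc) (α t.succ) (Uh (prefixHist α t))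

/-- The path measure of the static game:
`P̂_π(α) = π(α¹) ∏_t P̂^{α^t}(α^{t+1})`. -/
noncomputable def pathStatic {n : ℕ} (P : Rule n) (Uhat : UtilProfile n)
    (π : Profile n → ℝ) (T : ℕ) (α : Fin (T + 1) → Profile n) : ℝ :=
  π (α 0) * ∏ t : Fin T, P (α t.castSucc) (α t.succ) Uhat

/-- `π` is a probability distribution on the set of action profiles. -/
def IsProb {n : ℕ} (π : Profile n → ℝ) : Prop :=
  (∀ a, 0 ≤ π a) ∧ ∑ a : Profile n, π a = 1

/-!
Couple the two processes step by step. From a pair of current profiles `a ≤ b`, pick the same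
agent `i` for both chains and let the lower chain play `1` with probability `p` (static payoffs
at `a`) and the upper chain with probability `q` (history payoffs at `b`). Alignment says that
at `b` the history game pays more for `1` and less for `0` than the reference game at `a`, so by
locality and monotonicity `p ≤ q`, and the two Bernoulli moves admit a coupling that keeps the
order. Multiplying these step couplings along pairs of paths gives a coupling of the path
measures supported on ordered pairs, by induction on the length.
-/

abbrev History (X : Type*) := Σ T : ℕ, (Fin (T + 1) → X)

section PathCoupling

variable {X : Type*}

def histPrefix {T : ℕ} (α : Fin (T + 1) → X) (t : Fin T) : History X :=
  ⟨t.1, fun s => α (Fin.castLE (Nat.succ_le_succ t.isLt.le) s)⟩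

noncomputable def pathMeasure (μ : X → ℝ) (K : History X → X → ℝ) (T : ℕ)
    (α : Fin (T + 1) → X) : ℝ :=
  μ (α 0) * ∏ t : Fin T, K (histPrefix α t) (α t.succ)

noncomputable def pathCoupling (c₀ : X → X → ℝ) (C : History X → History X → X → X → ℝ)
    (T : ℕ) (α β : Fin (T + 1) → X) : ℝ :=
  c₀ (α 0) (β 0) * ∏ t : Fin T, C (histPrefix α t) (histPrefix β t) (α t.succ) (β t.succ)

@[simp]
lemma histPrefix_snoc_castSucc {T : ℕ} (g : Fin (T + 1) → X) (x : X) (t : Fin T) :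
    histPrefix (Fin.snoc g x : Fin (T + 2) → X) t.castSucc = histPrefix g t := by
  simp only [histPrefix, Fin.val_castSucc]
  congr 1
  funext s
  exact Fin.snoc_castSucc (α := fun _ => X) (i := Fin.castLE _ s) ..

@[simp]
lemma histPrefix_snoc_last {T : ℕ} (g : Fin (T + 1) → X) (x : X) :
    histPrefix (Fin.snoc g x : Fin (T + 2) → X) (Fin.last T) = ⟨T, g⟩ := by
  simp only [histPrefix, Fin.val_last]
  congr 1
  funext s
  exact Fin.snoc_castSucc (α := fun _ => X) (i := s) ..

lemma pathMeasure_snoc (μ : X → ℝ) (K : History X → X → ℝ) {T : ℕ} (g : Fin (T + 1) → X)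
    (x : X) : pathMeasure μ K (T + 1) (Fin.snoc g x) = pathMeasure μ K T g * K ⟨T, g⟩ x := by
  rw [pathMeasure, pathMeasure, Fin.prod_univ_castSucc]
  simp only [Fin.succ_castSucc, Fin.snoc_castSucc, Fin.succ_last, Fin.snoc_last,
    histPrefix_snoc_castSucc, histPrefix_snoc_last]
  simp [mul_assoc]

lemma pathCoupling_snoc (c₀ : X → X → ℝ) (C : History X → History X → X → X → ℝ) {T : ℕ}
    (g g' : Fin (T + 1) → X) (x y : X) :
    pathCoupling c₀ C (T + 1) (Fin.snoc g x) (Fin.snoc g' y) =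
      pathCoupling c₀ C T g g' * C ⟨T, g⟩ ⟨T, g'⟩ x y := by
  rw [pathCoupling, pathCoupling, Fin.prod_univ_castSucc]
  simp only [Fin.succ_castSucc, Fin.snoc_castSucc, Fin.succ_last, Fin.snoc_last,
    histPrefix_snoc_castSucc, histPrefix_snoc_last]
  simp [mul_assoc]

lemma Fintype.sum_fin_succ_pi {M : Type*} [Fintype X] [AddCommMonoid M] {T : ℕ}
    (F : (Fin (T + 1) → X) → M) : ∑ α, F α = ∑ g : Fin T → X, ∑ x, F (Fin.snoc g x) := by
  rw [← Fintype.sum_equiv (Fin.snocEquiv fun _ => X) (fun p => F (Fin.snoc p.2 p.1)) F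
    fun _ => rfl, Fintype.sum_prod_type, Finset.sum_comm]

lemma Fintype.sum_fin_one_pi {M : Type*} [Fintype X] [AddCommMonoid M]
    (F : (Fin 1 → X) → M) : ∑ α, F α = ∑ x, F fun _ => x :=
  (Fintype.sum_equiv (Equiv.funUnique (Fin 1) X).symm _ _ fun _ => rfl).symm

lemma Fin.snoc_le_snoc_iff [LE X] {T : ℕ} {g g' : Fin T → X} {x y : X} :
    (Fin.snoc g x : Fin (T + 1) → X) ≤ Fin.snoc g' y ↔ g ≤ g' ∧ x ≤ y := by
  rw [and_comm, ← Prod.mk_le_mk]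
  exact (Fin.snocOrderIso fun _ => X).le_iff_le (x := (x, g)) (y := (y, g'))

structure IsOrderedCoupling [Fintype X] [LE X] (p q : X → ℝ) (c : X → X → ℝ) : Prop where
  nonneg : ∀ x y, 0 ≤ c x y
  eq_zero_of_not_le : ∀ x y, ¬ x ≤ y → c x y = 0
  sum_right : ∀ x, ∑ y, c x y = p x
  sum_left : ∀ y, ∑ x, c x y = q y

lemma IsOrderedCoupling.isMonotoneCoupling [Fintype X] [PartialOrder X] {p q : X → ℝ}
    {c : X → X → ℝ} (hc : IsOrderedCoupling p q c) (hp : ∑ x, p x = 1) :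
    IsMonotoneCoupling p q c := by
  have sum_filter_eq {f : X → ℝ} {s : X → Prop} [DecidablePred s]
      (hf : ∀ x, ¬ s x → f x = 0) : ∑ x ∈ univ.filter s, f x = ∑ x, f x :=
    Finset.sum_subset (filter_subset _ _) fun x _ hx => hf x (by simpa using hx)
  refine ⟨hc.nonneg, ?_, hc.eq_zero_of_not_le, fun y => ?_, fun x => ?_⟩
  · simp only [hc.sum_right, hp]
  · rw [sum_filter_eq fun x hx => hc.eq_zero_of_not_le x y hx, hc.sum_left]
  · rw [sum_filter_eq fun y hy => hc.eq_zero_of_not_le x y hy, hc.sum_right]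

lemma IsOrderedCoupling.diag [Fintype X] [Preorder X] {μ : X → ℝ} (hμ : ∀ x, 0 ≤ μ x) :
    IsOrderedCoupling μ μ fun x y => if x = y then μ x else 0 where
  nonneg x y := by split_ifs <;> simp [hμ]
  eq_zero_of_not_le x y h := if_neg fun hxy => h hxy.le
  sum_right x := by simp
  sum_left y := by simp

variable {c₀ : X → X → ℝ} {C : History X → History X → X → X → ℝ}

lemma pathCoupling_nonneg_and_eq_zero [Preorder X] (hc₀ : ∀ x y, 0 ≤ c₀ x y)
    (hc₀_le : ∀ x y, ¬ x ≤ y → c₀ x y = 0)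
    (hC : ∀ (T : ℕ) (g g' : Fin (T + 1) → X), g ≤ g' → ∀ x y,
      0 ≤ C ⟨T, g⟩ ⟨T, g'⟩ x y ∧ (¬ x ≤ y → C ⟨T, g⟩ ⟨T, g'⟩ x y = 0)) :
    ∀ (T : ℕ) (α β : Fin (T + 1) → X),
      0 ≤ pathCoupling c₀ C T α β ∧ (¬ α ≤ β → pathCoupling c₀ C T α β = 0)
  | 0, α, β => by
    have hle : α ≤ β ↔ α 0 ≤ β 0 := by simp [Pi.le_def, Fin.forall_fin_one]
    simpa [pathCoupling, hle] using ⟨hc₀ _ _, hc₀_le _ _⟩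
  | T + 1, α, β => by
    induction α using Fin.snocCases with | snoc g x => ?_
    induction β using Fin.snocCases with | snoc g' y => ?_
    obtain ⟨ih_nonneg, ih_zero⟩ := pathCoupling_nonneg_and_eq_zero hc₀ hc₀_le hC T g g'
    rw [pathCoupling_snoc, Fin.snoc_le_snoc_iff]
    by_cases hg : g ≤ g'
    · obtain ⟨hC_nonneg, hC_zero⟩ := hC T g g' hg x y
      refine ⟨mul_nonneg ih_nonneg hC_nonneg, fun hxy => ?_⟩
      rw [hC_zero fun h => hxy ⟨hg, h⟩, mul_zero]
    · simp [ih_zero hg]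

variable [Fintype X]

lemma sum_pathCoupling_left {ν : X → ℝ} {L : History X → X → ℝ}
    (hc₀ : ∀ y, ∑ x, c₀ x y = ν y) (hC : ∀ h h' y, ∑ x, C h h' x y = L h' y) :
    ∀ (T : ℕ) (β : Fin (T + 1) → X), ∑ α, pathCoupling c₀ C T α β = pathMeasure ν L T β
  | 0, β => by simp [pathCoupling, pathMeasure, Fintype.sum_fin_one_pi, hc₀]
  | T + 1, β => by
    induction β using Fin.snocCases with | snoc g' y => ?_
    simp only [Fintype.sum_fin_succ_pi, pathCoupling_snoc, ← mul_sum, hC, ← sum_mul,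
      sum_pathCoupling_left hc₀ hC T g', pathMeasure_snoc]

lemma sum_pathCoupling_right {μ : X → ℝ} {K : History X → X → ℝ}
    (hc₀ : ∀ x, ∑ y, c₀ x y = μ x) (hC : ∀ h h' x, ∑ y, C h h' x y = K h x)
    (T : ℕ) (α : Fin (T + 1) → X) : ∑ β, pathCoupling c₀ C T α β = pathMeasure μ K T α :=
  -- read backwards, `pathCoupling c₀ C` is the path coupling of the swapped step couplings
  sum_pathCoupling_left (C := fun h' h y x => C h h' x y) hc₀ (fun h' h x => hC h h' x) T α

theorem isOrderedCoupling_pathCoupling [Preorder X] {μ ν : X → ℝ} {K L : History X → X → ℝ}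
    (hc₀ : IsOrderedCoupling μ ν c₀) (hK : ∀ h h' x, ∑ y, C h h' x y = K h x)
    (hL : ∀ h h' y, ∑ x, C h h' x y = L h' y)
    (hC : ∀ (T : ℕ) (g g' : Fin (T + 1) → X), g ≤ g' → ∀ x y,
      0 ≤ C ⟨T, g⟩ ⟨T, g'⟩ x y ∧ (¬ x ≤ y → C ⟨T, g⟩ ⟨T, g'⟩ x y = 0)) (T : ℕ) :
    IsOrderedCoupling (pathMeasure μ K T) (pathMeasure ν L T) (pathCoupling c₀ C T) where
  nonneg α β := (pathCoupling_nonneg_and_eq_zero hc₀.nonneg hc₀.eq_zero_of_not_le hC T α β).1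
  eq_zero_of_not_le α β :=
    (pathCoupling_nonneg_and_eq_zero hc₀.nonneg hc₀.eq_zero_of_not_le hC T α β).2
  sum_right := sum_pathCoupling_right hc₀.sum_right hK T
  sum_left := sum_pathCoupling_left hc₀.sum_left hL T

lemma sum_pathMeasure {μ : X → ℝ} {K : History X → X → ℝ} (hμ : ∑ x, μ x = 1)
    (hK : ∀ h, ∑ x, K h x = 1) : ∀ T : ℕ, ∑ α, pathMeasure μ K T α = 1
  | 0 => by simp [pathMeasure, Fintype.sum_fin_one_pi, hμ]
  | T + 1 => by
    simp only [Fintype.sum_fin_succ_pi, pathMeasure_snoc, ← mul_sum, hK, mul_one,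
      sum_pathMeasure hμ hK T]

end PathCoupling

section TwoPoint

variable {X : Type*}

noncomputable def bernoulliOn (x₀ x₁ : X) (p : ℝ) (x : X) : ℝ :=
  (if x = x₁ then p else 0) + (if x = x₀ then 1 - p else 0)

/-- The monotone coupling of `bernoulliOn x₀ x₁ p` and `bernoulliOn y₀ y₁ q` for `p ≤ q`:
the pair `(x₀, y₁)` carries the excess mass `q - p`. -/
noncomputable def twoPointCoupling (x₀ x₁ y₀ y₁ : X) (p q : ℝ) (x y : X) : ℝ :=
  (if x = x₁ ∧ y = y₁ then p else 0) + (if x = x₀ ∧ y = y₁ then q - p else 0) +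
    (if x = x₀ ∧ y = y₀ then 1 - q else 0)

lemma sum_twoPointCoupling_right [Fintype X] (x₀ x₁ y₀ y₁ : X) (p q : ℝ) (x : X) :
    ∑ y, twoPointCoupling x₀ x₁ y₀ y₁ p q x y = bernoulliOn x₀ x₁ p x := by
  simp only [twoPointCoupling, bernoulliOn, sum_add_distrib, ite_and, Finset.sum_ite_irrel]
  simp
  split_ifs <;> ring

lemma sum_twoPointCoupling_left [Fintype X] (x₀ x₁ y₀ y₁ : X) (p q : ℝ) (y : X) :
    ∑ x, twoPointCoupling x₀ x₁ y₀ y₁ p q x y = bernoulliOn y₀ y₁ q y := by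
  simp only [twoPointCoupling, bernoulliOn, sum_add_distrib, ite_and]
  simp
  split_ifs <;> ring

lemma twoPointCoupling_nonneg {x₀ x₁ y₀ y₁ : X} {p q : ℝ} (hp : 0 ≤ p) (hpq : p ≤ q)
    (hq : q ≤ 1) (x y : X) : 0 ≤ twoPointCoupling x₀ x₁ y₀ y₁ p q x y := by
  unfold twoPointCoupling
  split_ifs <;> linarith

lemma twoPointCoupling_eq_zero [LE X] {x₀ x₁ y₀ y₁ : X} (h₀₀ : x₀ ≤ y₀) (h₀₁ : x₀ ≤ y₁)
    (h₁₁ : x₁ ≤ y₁) (p q : ℝ) {x y : X} (hxy : ¬ x ≤ y) :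
    twoPointCoupling x₀ x₁ y₀ y₁ p q x y = 0 := by
  have hne {x' y' : X} (h : x' ≤ y') : ¬ (x = x' ∧ y = y') := by
    rintro ⟨rfl, rfl⟩
    exact hxy h
  simp [twoPointCoupling, hne h₀₀, hne h₀₁, hne h₁₁]

end TwoPoint

section Agents

open Function

variable {n : ℕ} {i : Fin n} {P : Rule n}

lemma IsIndividual.apply_eq_zero (hP : IsIndividual i P) {a y : Profile n}
    (hy : ∀ c, y ≠ update a i c) (U : UtilProfile n) : P a y U = 0 := by
  refine hP.2.2 a y U ?_
  by_contra! h
  exact hy (y i) (eq_update_iff.2 ⟨rfl, fun j hj => (h j hj).symm⟩)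

lemma IsIndividual.apply_update_false_add_apply_update_true_s5 (hP : IsIndividual i P)
    (a : Profile n) (U : UtilProfile n) :
    P a (update a i false) U + P a (update a i true) U = 1 := by
  rw [← hP.1 a U, Fintype.sum_eq_add _ _ ((update_injective a i).ne Bool.false_ne_true)]
  rintro y ⟨h₀, h₁⟩
  exact hP.apply_eq_zero (by rintro (_ | _) <;> assumption) U

lemma IsIndividual.apply_eq_bernoulliOn (hP : IsIndividual i P) (a y : Profile n)
    (U : UtilProfile n) :
    P a y U = bernoulliOn (update a i false) (update a i true) (P a (update a i true) U) y := by
  have hsum := hP.apply_update_false_add_apply_update_true_s5 a U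
  have hne := (update_injective a i).ne Bool.false_ne_true
  unfold bernoulliOn
  by_cases h₁ : y = update a i true
  · simp [h₁, hne.symm]
  by_cases h₀ : y = update a i false
  · simp only [h₀, hne, if_false, if_true, zero_add]
    linarith
  · simp [h₀, h₁, hP.apply_eq_zero (by rintro (_ | _) <;> assumption) U]

lemma IsMonotoneRule.apply_update_le (hMon : IsMonotoneRule i P) (hLoc : IsLocalRule i P)
    {a b : Profile n} {U V : UtilProfile n} (c : Bool)
    (hc : U i (update a i c) ≤ V i (update b i c))
    (hnc : U i (update a i !c) = V i (update b i !c)) :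
    P a (update a i c) U ≤ P b (update b i c) V := by
  obtain ⟨Pbar, hPbar⟩ := hLoc
  set W := bump i U c (V i (update b i c) - U i (update a i c))
  calc P a (update a i c) U ≤ P a (update a i c) W := hMon U c _ (sub_nonneg.2 hc) a
    _ = P b (update b i c) V := by
      rw [hPbar, hPbar]
      cases c <;> simp_all [W, bump]

lemma IsMonotoneRule.apply_update_true_le (hMon : IsMonotoneRule i P)
    (hLoc : IsLocalRule i P) (hInd : IsIndividual i P) {a b : Profile n}
    {U V : UtilProfile n} (h₁ : U i (update a i true) ≤ V i (update b i true))
    (h₀ : V i (update b i false) ≤ U i (update a i false)) :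
    P a (update a i true) U ≤ P b (update b i true) V := by
  -- `W` has `U`'s payoff for `0` and `V`'s payoff for `1`: passing from `U` to `W` raises the
  -- payoff of `1`, passing from `W` to `V` lowers the payoff of `0`
  set W := bump i U true (V i (update b i true) - U i (update a i true))
  have hW₁ : P a (update a i true) U ≤ P a (update a i true) W :=
    hMon U true _ (sub_nonneg.2 h₁) a
  have hW₀ : P b (update b i false) V ≤ P a (update a i false) W :=
    hMon.apply_update_le hLoc false (by simpa [W, bump] using h₀) (by simp [W, bump])
  linarith [hInd.apply_update_false_add_apply_update_true_s5 a W,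
    hInd.apply_update_false_add_apply_update_true_s5 b V]

lemma sum_asyncRule {Pvec : Fin n → Rule n} (hn : n ≠ 0) (hP : ∀ i, IsIndividual i (Pvec i))
    (a : Profile n) (U : UtilProfile n) : ∑ b, asyncRule Pvec a b U = 1 := by
  simp only [asyncRule, ← mul_sum]
  rw [sum_comm]
  simp [fun i => (hP i).1 a U, hn]

end Agents

section AsyncCoupling

open Function

variable {n : ℕ} {Pvec : Fin n → Rule n}

noncomputable def asyncCoupling (Pvec : Fin n → Rule n) (U V : UtilProfile n)
    (a b x y : Profile n) : ℝ :=
  (1 / (n : ℝ)) * ∑ i, twoPointCoupling (update a i false) (update a i true)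
    (update b i false) (update b i true) (Pvec i a (update a i true) U)
    (Pvec i b (update b i true) V) x y

lemma sum_asyncCoupling_right (hP : ∀ i, IsIndividual i (Pvec i)) (U V : UtilProfile n)
    (a b x : Profile n) : ∑ y, asyncCoupling Pvec U V a b x y = asyncRule Pvec a x U := by
  simp only [asyncCoupling, asyncRule, ← mul_sum]
  rw [sum_comm]
  simp only [sum_twoPointCoupling_right, ← (hP _).apply_eq_bernoulliOn]

lemma sum_asyncCoupling_left (hP : ∀ i, IsIndividual i (Pvec i)) (U V : UtilProfile n)
    (a b y : Profile n) : ∑ x, asyncCoupling Pvec U V a b x y = asyncRule Pvec b y V := by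
  simp only [asyncCoupling, asyncRule, ← mul_sum]
  rw [sum_comm]
  simp only [sum_twoPointCoupling_left, ← (hP _).apply_eq_bernoulliOn]

lemma asyncCoupling_nonneg (hP : ∀ i, IsIndividual i (Pvec i)) {U V : UtilProfile n}
    {a b : Profile n}
    (hab : ∀ i, Pvec i a (update a i true) U ≤ Pvec i b (update b i true) V) (x y : Profile n) :
    0 ≤ asyncCoupling Pvec U V a b x y :=
  mul_nonneg (by positivity) <| sum_nonneg fun i _ =>
    twoPointCoupling_nonneg ((hP i).2.1 _ _ _).1 (hab i) ((hP i).2.1 _ _ _).2 x y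

lemma asyncCoupling_eq_zero {U V : UtilProfile n} {a b x y : Profile n} (hab : a ≤ b)
    (hxy : ¬ x ≤ y) : asyncCoupling Pvec U V a b x y = 0 := by
  have hle {i : Fin n} {c c' : Bool} (hc : c ≤ c') : update a i c ≤ update b i c' :=
    update_le_update_iff.2 ⟨hc, fun j _ => hab j⟩
  simp only [asyncCoupling, twoPointCoupling_eq_zero (hle le_rfl) (hle (Bool.false_le _))
    (hle le_rfl) _ _ hxy, sum_const_zero, mul_zero]

end AsyncCoupling

lemma pathStatic_eq_pathMeasure {n : ℕ} (P : Rule n) (Uhat : UtilProfile n)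
    (π : Profile n → ℝ) (T : ℕ) :
    pathStatic P Uhat π T = pathMeasure π (fun h x => P (lastProf h) x Uhat) T :=
  rfl

lemma pathHist_eq_pathMeasure {n : ℕ} (P : Rule n) (Uh : Hist n → UtilProfile n)
    (π : Profile n → ℝ) (T : ℕ) :
    pathHist P Uh π T = pathMeasure π (fun h x => P (lastProf h) x (Uh h)) T :=
  rfl

/-- For an aligned history-dependent game with a local and monotone asynchronous
learning rule and initial distribution `π`, a monotone coupling exists between the
path measures `P̂_π` and `P_π` on paths of any length `T ≥ 1`. -/
theorem path_monotone_coupling (n : ℕ) (hn : 1 ≤ n) (Pvec : Fin n → Rule n)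
    (hP : ∀ i, IsIndividual i (Pvec i) ∧ IsLocalRule i (Pvec i) ∧ IsMonotoneRule i (Pvec i))
    (Uh : Hist n → UtilProfile n) (Uhat : UtilProfile n) (hA : Aligned Uh Uhat)
    (π : Profile n → ℝ) (hπ : IsProb π) (T : ℕ) :
    ∃ p : (Fin (T + 1) → Profile n) → (Fin (T + 1) → Profile n) → ℝ,
      IsMonotoneCoupling (pathStatic (asyncRule Pvec) Uhat π T)
        (pathHist (asyncRule Pvec) Uh π T) p := by
  have hInd i := (hP i).1
  let C (h h' : Hist n) := asyncCoupling Pvec Uhat (Uh h') (lastProf h) (lastProf h')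
  have hC (T : ℕ) (g g' : Fin (T + 1) → Profile n) (hg : g ≤ g') (x y : Profile n) :
      0 ≤ C ⟨T, g⟩ ⟨T, g'⟩ x y ∧ (¬ x ≤ y → C ⟨T, g⟩ ⟨T, g'⟩ x y = 0) := by
    have hpay i := hA ⟨T, g'⟩ (g (Fin.last T)) i fun j _ => hg _ j
    refine ⟨asyncCoupling_nonneg hInd (fun i => ?_) x y, asyncCoupling_eq_zero (hg _)⟩
    exact (hP i).2.2.apply_update_true_le (hP i).2.1 (hInd i) (hpay i).1 (hpay i).2
  rw [pathStatic_eq_pathMeasure, pathHist_eq_pathMeasure]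
  exact ⟨_, (isOrderedCoupling_pathCoupling (C := C) (IsOrderedCoupling.diag hπ.1)
    (fun _ _ => sum_asyncCoupling_right hInd _ _ _ _)
    (fun _ _ => sum_asyncCoupling_left hInd _ _ _ _) hC T).isMonotoneCoupling
    (sum_pathMeasure hπ.2 (fun _ => sum_asyncRule (Nat.one_le_iff_ne_zero.1 hn) hInd _ _) T)⟩
end

section
/- Let g be an aligned history-dependent game with reference static game ĝ, let P be a local and monotone asynchronous learning rule, let π be a probability distribution on A, let T ≥ 1, and let Z : A_T → ℤ≥0 be increasing with respect to the componentwise partial order on A_T. Then the expectation of Z under the path measure P_π of the history-dependent game is at least its expectation under the path measure P̂_π of the static game: E_{P_π}(Z) ≥ E_{P̂_π}(Z). -/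
open scoped Classical
open Finset

/-!
Both expectations are computed by backward induction on the first step. A step of agent `i`'s
rule only moves between `a[i ↦ 0]` and `a[i ↦ 1]`, and locality plus monotonicity make the
probability of moving to `1` increasing in `U_i(1, ·)` and decreasing in `U_i(0, ·)`. Alignment
therefore gives the history-dependent game, started at `a`, a larger switching probability than
the static game started at `b ≤ a`, and the monotone coupling of the two two-point laws keeps
the paths ordered. By induction on `T` the static expectation from `b` of `Zs` is at most the
history-dependent expectation from `a` of `Zh` whenever `Zs γ ≤ Zh δ` for `γ ≤ δ`.
-/

open Function

/-- The monotone coupling: mass `q` goes from `x₁` to `y₁`, `p - q` from `x₀` to `y₁`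
and `1 - p` from `x₀` to `y₀`. -/
theorem two_point_mean_le {p q x₀ x₁ y₀ y₁ : ℝ} (hq : 0 ≤ q) (hqp : q ≤ p) (hp : p ≤ 1)
    (h₁ : x₁ ≤ y₁) (h₀₁ : x₀ ≤ y₁) (h₀ : x₀ ≤ y₀) :
    q * x₁ + (1 - q) * x₀ ≤ p * y₁ + (1 - p) * y₀ := by
  nlinarith [mul_le_mul_of_nonneg_left h₁ hq, mul_le_mul_of_nonneg_left h₀₁ (sub_nonneg.2 hqp),
    mul_le_mul_of_nonneg_left h₀ (sub_nonneg.2 hp)]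

section Rules

variable {n : ℕ} {i : Fin n} {P : Rule n}

theorem IsIndividual.sum_mul_eq (hI : IsIndividual i P) (c : Profile n) (U : UtilProfile n)
    (F : Profile n → ℝ) :
    ∑ x, P c x U * F x
      = P c (update c i true) U * F (update c i true)
        + P c (update c i false) U * F (update c i false) := by
  have hne : update c i true ≠ update c i false := fun h => by simpa using congrFun h i
  rw [← Finset.sum_pair hne (f := fun x => P c x U * F x)]
  refine (Finset.sum_subset (Finset.subset_univ _) fun x _ hx => ?_).symm
  suffices ∃ j, j ≠ i ∧ c j ≠ x j by rw [hI.2.2 c x U this, zero_mul]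
  by_contra! h
  have : x = update c i (x i) := by
    ext j
    by_cases hj : j = i
    · subst hj; simp
    · simp [hj, h j hj]
  apply hx
  rw [this]
  cases x i <;> simp

theorem IsIndividual.stay_eq (hI : IsIndividual i P) (c : Profile n) (U : UtilProfile n) :
    P c (update c i false) U = 1 - P c (update c i true) U := by
  have := hI.sum_mul_eq c U 1
  simp only [Pi.one_apply, mul_one, hI.1 c U] at this
  linarith

def pairUtility (i : Fin n) (u₀ u₁ : ℝ) : UtilProfile n :=
  fun _ x => if x i then u₁ else u₀

-- Locality reduces `P` to a function `Pbar` of agent `i`'s two payoffs; evaluating `P` at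
-- `pairUtility` realises every pair, so the monotonicity of `P` transfers to `Pbar`.
theorem switch_prob_le (hI : IsIndividual i P) (hL : IsLocalRule i P) (hM : IsMonotoneRule i P)
    {a b : Profile n} {U V : UtilProfile n}
    (h₀ : U i (update a i false) ≤ V i (update b i false))
    (h₁ : V i (update b i true) ≤ U i (update a i true)) :
    P b (update b i true) V ≤ P a (update a i true) U := by
  obtain ⟨Pbar, hPbar⟩ := hL
  have mono_true : ∀ u₀ u₁ u₁', u₁ ≤ u₁' → Pbar true (u₀, u₁) ≤ Pbar true (u₀, u₁') := by
    intro u₀ u₁ u₁' h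
    simpa [hPbar, bump, pairUtility] using hM (pairUtility i u₀ u₁) true _ (sub_nonneg.2 h) a
  have anti_true : ∀ u₀ u₀' u₁, u₀ ≤ u₀' → Pbar true (u₀', u₁) ≤ Pbar true (u₀, u₁) := by
    intro u₀ u₀' u₁ h
    have := hM (pairUtility i u₀ u₁) false _ (sub_nonneg.2 h) a
    rw [hI.stay_eq, hI.stay_eq, sub_le_sub_iff_left] at this
    simpa [hPbar, bump, pairUtility] using this
  rw [hPbar, hPbar]
  exact (mono_true _ _ _ h₁).trans (anti_true _ _ _ h₀)

theorem IsIndividual.sum_mul_le_sum_mul (hI : IsIndividual i P) (hL : IsLocalRule i P)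
    (hM : IsMonotoneRule i P) {a b : Profile n} (hba : b ≤ a) {U V : UtilProfile n}
    (h₀ : U i (update a i false) ≤ V i (update b i false))
    (h₁ : V i (update b i true) ≤ U i (update a i true))
    {Ws Wh : Profile n → ℝ} (hW : ∀ a' b', b' ≤ a' → Ws b' ≤ Wh a') :
    ∑ x, P b x V * Ws x ≤ ∑ x, P a x U * Wh x := by
  have hle : ∀ β γ : Bool, β ≤ γ → update b i β ≤ update a i γ :=
    fun β γ h => update_le_update_iff.2 ⟨h, fun j _ => hba j⟩
  rw [hI.sum_mul_eq, hI.sum_mul_eq, hI.stay_eq, hI.stay_eq]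
  exact two_point_mean_le (hI.2.1 _ _ _).1 (switch_prob_le hI hL hM h₀ h₁) (hI.2.1 _ _ _).2
    (hW _ _ (hle _ _ le_rfl)) (hW _ _ (hle false true (Bool.false_le _))) (hW _ _ (hle _ _ le_rfl))

end Rules

section Async

variable {n : ℕ} {Pvec : Fin n → Rule n}

theorem asyncRule_sum_mul (c : Profile n) (V : UtilProfile n) (F : Profile n → ℝ) :
    ∑ x, asyncRule Pvec c x V * F x = 1 / (n : ℝ) * ∑ i, ∑ x, Pvec i c x V * F x := by
  simp only [asyncRule, mul_assoc, Finset.sum_mul, ← Finset.mul_sum]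
  rw [Finset.sum_comm]

theorem asyncRule_sum_mul_le_sum_mul
    (hP : ∀ i, IsIndividual i (Pvec i) ∧ IsLocalRule i (Pvec i) ∧ IsMonotoneRule i (Pvec i))
    {a b : Profile n} (hba : b ≤ a) {U V : UtilProfile n}
    (h₀ : ∀ i, U i (update a i false) ≤ V i (update b i false))
    (h₁ : ∀ i, V i (update b i true) ≤ U i (update a i true))
    {Ws Wh : Profile n → ℝ} (hW : ∀ a' b', b' ≤ a' → Ws b' ≤ Wh a') :
    ∑ x, asyncRule Pvec b x V * Ws x ≤ ∑ x, asyncRule Pvec a x U * Wh x := by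
  rw [asyncRule_sum_mul, asyncRule_sum_mul]
  refine mul_le_mul_of_nonneg_left (Finset.sum_le_sum fun i _ => ?_) (by positivity)
  obtain ⟨hI, hL, hM⟩ := hP i
  exact hI.sum_mul_le_sum_mul hL hM hba (h₀ i) (h₁ i) hW

end Async

section Histories

variable {n : ℕ}

def consHist (a : Profile n) (h : Hist n) : Hist n :=
  ⟨h.1 + 1, Fin.cons a h.2⟩

theorem lastProf_consHist (a : Profile n) (h : Hist n) : lastProf (consHist a h) = lastProf h := by
  simp [lastProf, consHist, ← Fin.succ_last]

theorem Aligned.comp_consHist {Uh : Hist n → UtilProfile n} {Uhat : UtilProfile n}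
    (hA : Aligned Uh Uhat) (a : Profile n) : Aligned (fun h => Uh (consHist a h)) Uhat := by
  intro h c i hle
  simpa only [lastProf_consHist] using
    hA (consHist a h) c i (by simpa only [lastProf_consHist] using hle)

theorem prefixHist_cons_zero {T : ℕ} (c : Profile n) (γ : Fin (T + 1) → Profile n) :
    prefixHist (Fin.cons c γ : Fin (T + 2) → Profile n) 0 = ⟨0, fun _ => c⟩ := by
  simp only [prefixHist, Fin.val_zero]
  congr 1
  funext s
  rw [Fin.fin_one_eq_zero s]
  rfl

theorem prefixHist_cons_succ {T : ℕ} (c : Profile n) (γ : Fin (T + 1) → Profile n) (s : Fin T) :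
    prefixHist (Fin.cons c γ : Fin (T + 2) → Profile n) s.succ
      = consHist c (prefixHist γ s) := by
  simp only [prefixHist, consHist]
  congr 1
  funext r
  cases r using Fin.cases <;> simp

theorem pathHist_cons (P : Rule n) (Uh : Hist n → UtilProfile n) (π : Profile n → ℝ) {T : ℕ}
    (c : Profile n) (γ : Fin (T + 1) → Profile n) :
    pathHist P Uh π (T + 1) (Fin.cons c γ)
      = π c * pathHist P (fun h => Uh (consHist c h))
          (fun x => P c x (Uh ⟨0, fun _ => c⟩)) T γ := by
  simp [pathHist, Fin.prod_univ_succ, prefixHist_cons_zero, prefixHist_cons_succ]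

end Histories

section Expectation

variable {n : ℕ}

/-- The expectation of `Z` over paths started at `a`; after the first step the game sees
histories through `consHist a`. -/
noncomputable def expectFrom (P : Rule n) :
    (T : ℕ) → (Hist n → UtilProfile n) → ((Fin (T + 1) → Profile n) → ℝ) → Profile n → ℝ
  | 0, _, Z, a => Z fun _ => a
  | T + 1, Uh, Z, a => ∑ a', P a a' (Uh ⟨0, fun _ => a⟩) *
      expectFrom P T (fun h => Uh (consHist a h)) (fun γ => Z (Fin.cons a γ)) a'

theorem sum_pathHist_mul (P : Rule n) (T : ℕ) (Uh : Hist n → UtilProfile n)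
    (π : Profile n → ℝ) (Z : (Fin (T + 1) → Profile n) → ℝ) :
    ∑ α, pathHist P Uh π T α * Z α = ∑ a, π a * expectFrom P T Uh Z a := by
  induction T generalizing Uh π with
  | zero =>
    rw [← (Equiv.funUnique (Fin 1) (Profile n)).symm.sum_comp]
    simp only [pathHist, Equiv.funUnique_symm_apply, Finset.univ_eq_empty,
      Finset.prod_empty, mul_one, expectFrom]
    rfl
  | succ T ih =>
    rw [← (Fin.consEquiv fun _ => Profile n).sum_comp, Fintype.sum_prod_type]
    simp only [Fin.consEquiv, Equiv.coe_fn_mk, pathHist_cons, mul_assoc, ← Finset.mul_sum, ih,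
      expectFrom]

theorem expectFrom_le_expectFrom {Pvec : Fin n → Rule n}
    (hP : ∀ i, IsIndividual i (Pvec i) ∧ IsLocalRule i (Pvec i) ∧ IsMonotoneRule i (Pvec i))
    {Uhat : UtilProfile n} (T : ℕ) {Uh : Hist n → UtilProfile n} (hA : Aligned Uh Uhat)
    {Zs Zh : (Fin (T + 1) → Profile n) → ℝ} (hZ : ∀ γ δ, γ ≤ δ → Zs γ ≤ Zh δ)
    {a b : Profile n} (hba : b ≤ a) :
    expectFrom (asyncRule Pvec) T (fun _ => Uhat) Zs b ≤ expectFrom (asyncRule Pvec) T Uh Zh a := by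
  induction T generalizing Uh a b with
  | zero => exact hZ _ _ fun _ => hba
  | succ T ih =>
    have hstep := fun i => hA ⟨0, fun _ => a⟩ b i fun j _ => hba j
    exact asyncRule_sum_mul_le_sum_mul hP hba (fun i => (hstep i).2) (fun i => (hstep i).1)
      fun a' b' h => ih (hA.comp_consHist a)
        (fun γ δ hγδ => hZ _ _ (Fin.cons_le_cons.2 ⟨hba, hγδ⟩)) h

end Expectation

theorem expectation_of_increasing_general (n : ℕ) (Pvec : Fin n → Rule n)
    (hP : ∀ i, IsIndividual i (Pvec i) ∧ IsLocalRule i (Pvec i) ∧ IsMonotoneRule i (Pvec i))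
    (Uh : Hist n → UtilProfile n) (Uhat : UtilProfile n) (hA : Aligned Uh Uhat)
    (π : Profile n → ℝ) (hπ : IsProb π) (T : ℕ)
    (Z : (Fin (T + 1) → Profile n) → ℕ) (hZ : Monotone Z) :
    ∑ α : Fin (T + 1) → Profile n, pathStatic (asyncRule Pvec) Uhat π T α * (Z α : ℝ)
      ≤ ∑ α : Fin (T + 1) → Profile n, pathHist (asyncRule Pvec) Uh π T α * (Z α : ℝ) := by
  change ∑ α, pathHist (asyncRule Pvec) (fun _ => Uhat) π T α * (Z α : ℝ) ≤ _
  rw [sum_pathHist_mul, sum_pathHist_mul]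
  gcongr with a
  · exact hπ.1 a
  · exact expectFrom_le_expectFrom hP T hA (fun γ δ h => Nat.cast_le.2 (hZ h)) le_rfl

/-- For an aligned history-dependent game with a local and monotone asynchronous
learning rule, every increasing `Z : A_T → ℤ≥0` has at least as large an expectation
under the history-dependent path measure as under the static one. -/
theorem expectation_of_increasing (n : ℕ) (hn : 1 ≤ n) (Pvec : Fin n → Rule n)
    (hP : ∀ i, IsIndividual i (Pvec i) ∧ IsLocalRule i (Pvec i) ∧ IsMonotoneRule i (Pvec i))
    (Uh : Hist n → UtilProfile n) (Uhat : UtilProfile n) (hA : Aligned Uh Uhat)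
    (π : Profile n → ℝ) (hπ : IsProb π) (T : ℕ)
    (Z : (Fin (T + 1) → Profile n) → ℕ) (hZ : Monotone Z) :
    ∑ α : Fin (T + 1) → Profile n, pathStatic (asyncRule Pvec) Uhat π T α * (Z α : ℝ)
      ≤ ∑ α : Fin (T + 1) → Profile n, pathHist (asyncRule Pvec) Uh π T α * (Z α : ℝ) :=
  expectation_of_increasing_general n Pvec hP Uh Uhat hA π hπ T Z hZ
end

section
/- Let g be an aligned history-dependent game with reference static game ĝ, let P be a local and monotone asynchronous learning rule, let π be a probability distribution on A, let T ≥ 1, and let I ⊆ A_T be an upper set (α ∈ I and α' ≥ α componentwise imply α' ∈ I). Then P_π(I) ≥ P̂_π(I). -/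
open scoped Classical
open Finset

/-!
The history-dependent chain can be coupled to the static one so that it stays componentwise
above it. In one step of the asynchronous dynamics the same agent `i` revises in both chains.
Alignment says that, from a higher profile, `i`'s payoff for `1` is higher and for `0` is lower
than in the static game at the lower profile; by locality and monotonicity `i` then switches to
`1` with at least the static probability, and the two two-point distributions can be coupled
monotonically. Peeling off the last step, induction on `T` yields
`E_static[φ] ≤ E_hist[ψ]` whenever `φ α ≤ ψ β` for all `α ≤ β`; indicators of an upper set
are such a pair.
-/

open Function

section IndividualRule

variable {n : ℕ} {i : Fin n} {P : Rule n}

lemma update_false_ne_update_true (a : Profile n) (i : Fin n) :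
    update a i false ≠ update a i true :=
  fun h => by simpa using congrFun h i

namespace IsIndividual

lemma sum_mul_eq_add (hP : IsIndividual i P) (a : Profile n) (U : UtilProfile n)
    (φ : Profile n → ℝ) :
    ∑ c, P a c U * φ c
      = P a (update a i false) U * φ (update a i false)
        + P a (update a i true) U * φ (update a i true) := by
  refine Fintype.sum_eq_add _ _ (update_false_ne_update_true a i) fun c ⟨hc0, hc1⟩ => ?_
  suffices ∃ j, j ≠ i ∧ a j ≠ c j by rw [hP.2.2 a c U this, zero_mul]
  by_contra! h
  have hc : c = update a i (c i) := by
    ext j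
    rcases eq_or_ne j i with rfl | hj
    · simp
    · simp [hj, h j hj]
  cases hci : c i
  · exact hc0 (by rwa [hci] at hc)
  · exact hc1 (by rwa [hci] at hc)

lemma prob_false_add_prob_true (hP : IsIndividual i P) (a : Profile n) (U : UtilProfile n) :
    P a (update a i false) U + P a (update a i true) U = 1 := by
  have h := hP.sum_mul_eq_add a U fun _ => 1
  simp only [mul_one] at h
  rw [← h, hP.1]

lemma sum_mul_le_sum_mul_s7 (hP : IsIndividual i P) {a a' : Profile n} (ha : a ≤ a')
    {U V : UtilProfile n} (hswitch : P a (update a i true) U ≤ P a' (update a' i true) V)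
    {φ ψ : Profile n → ℝ} (hφψ : ∀ c c', c ≤ c' → φ c ≤ ψ c') :
    ∑ c, P a c U * φ c ≤ ∑ c, P a' c V * ψ c := by
  have hcross : ∀ b b' : Bool, b ≤ b' → φ (update a i b) ≤ ψ (update a' i b') :=
    fun b b' hb => hφψ _ _ (update_le_update_iff.2 ⟨hb, fun j _ => ha j⟩)
  rw [hP.sum_mul_eq_add, hP.sum_mul_eq_add,
    eq_sub_of_add_eq (hP.prob_false_add_prob_true a U),
    eq_sub_of_add_eq (hP.prob_false_add_prob_true a' V)]
  -- Couple `(1-p, p)` with `(1-q, q)`: mass `1-q` on `(0,0)`, `q-p` on `(0,1)`, `p` on `(1,1)`.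
  have hp := (hP.2.1 a (update a i true) U).1
  have hq := (hP.2.1 a' (update a' i true) V).2
  linarith [mul_le_mul_of_nonneg_left (hcross false false le_rfl) (sub_nonneg.2 hq),
    mul_le_mul_of_nonneg_left (hcross false true (by decide)) (sub_nonneg.2 hswitch),
    mul_le_mul_of_nonneg_left (hcross true true le_rfl) hp]

end IsIndividual

lemma IsLocalRule.apply_eq (hL : IsLocalRule i P) {a a' : Profile n} {U V : UtilProfile n}
    (h0 : U i (update a i false) = V i (update a' i false))
    (h1 : U i (update a i true) = V i (update a' i true)) (b : Bool) :
    P a (update a i b) U = P a' (update a' i b) V := by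
  obtain ⟨Pbar, hPbar⟩ := hL
  rw [hPbar, hPbar, h0, h1]

/-- Bumping `U_i(1)` on the left and `V_i(0)` on the right brings both sides to the payoff pair
`(U_i(0), V_i(1))`, where locality identifies the two rules. -/
lemma prob_true_le_of_payoff_le (hI : IsIndividual i P) (hL : IsLocalRule i P)
    (hM : IsMonotoneRule i P) {a a' : Profile n} {U V : UtilProfile n}
    (h1 : U i (update a i true) ≤ V i (update a' i true))
    (h0 : V i (update a' i false) ≤ U i (update a i false)) :
    P a (update a i true) U ≤ P a' (update a' i true) V := by
  set U' := bump i U true (V i (update a' i true) - U i (update a i true))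
  set V' := bump i V false (U i (update a i false) - V i (update a' i false))
  have hU'V' : ∀ b, P a (update a i b) U' = P a' (update a' i b) V' :=
    hL.apply_eq (by simp [U', V', bump]) (by simp [U', V', bump])
  calc P a (update a i true) U ≤ P a (update a i true) U' := hM U true _ (sub_nonneg.2 h1) a
    _ = P a' (update a' i true) V' := hU'V' true
    _ = 1 - P a' (update a' i false) V' := by linarith [hI.prob_false_add_prob_true a' V']
    _ ≤ 1 - P a' (update a' i false) V := by linarith [hM V false _ (sub_nonneg.2 h0) a']
    _ = P a' (update a' i true) V := by linarith [hI.prob_false_add_prob_true a' V]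

lemma Aligned.prob_true_le {Uh : Hist n → UtilProfile n} {Uhat : UtilProfile n}
    (hA : Aligned Uh Uhat) (hI : IsIndividual i P) (hL : IsLocalRule i P)
    (hM : IsMonotoneRule i P) (h : Hist n) {a : Profile n} (ha : a ≤ lastProf h) :
    P a (update a i true) Uhat ≤ P (lastProf h) (update (lastProf h) i true) (Uh h) :=
  have ⟨h1, h0⟩ := hA h a i fun j _ => ha j
  prob_true_le_of_payoff_le hI hL hM h1 h0

end IndividualRule

lemma asyncRule_sum_mul_le {n : ℕ} {Pvec : Fin n → Rule n}
    (hP : ∀ i, IsIndividual i (Pvec i)) {a a' : Profile n} (ha : a ≤ a')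
    {U V : UtilProfile n}
    (hswitch : ∀ i, Pvec i a (update a i true) U ≤ Pvec i a' (update a' i true) V)
    {φ ψ : Profile n → ℝ} (hφψ : ∀ c c', c ≤ c' → φ c ≤ ψ c') :
    ∑ c, asyncRule Pvec a c U * φ c ≤ ∑ c, asyncRule Pvec a' c V * ψ c := by
  simp only [asyncRule, mul_assoc, ← Finset.mul_sum, Finset.sum_mul]
  rw [Finset.sum_comm, Finset.sum_comm (γ := Profile n)]
  exact mul_le_mul_of_nonneg_left
    (sum_le_sum fun i _ => (hP i).sum_mul_le_sum_mul_s7 ha (hswitch i) hφψ) (by positivity)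

section Paths

variable {n T : ℕ}

lemma sum_pi_fin_succ_eq_sum_snoc {M α : Type*} [AddCommMonoid M] [Fintype α] {m : ℕ}
    (F : (Fin (m + 1) → α) → M) :
    ∑ x, F x = ∑ g : Fin m → α, ∑ c, F (Fin.snoc g c) := by
  rw [← (Fin.snocEquiv fun _ => α).sum_comp, Fintype.sum_prod_type, Finset.sum_comm]
  rfl

lemma Fin.snoc_le_snoc {α : Type*} [Preorder α] {m : ℕ} {g g' : Fin m → α} {c c' : α}
    (hg : g ≤ g') (hc : c ≤ c') :
    (Fin.snoc g c : Fin (m + 1) → α) ≤ Fin.snoc g' c' :=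
  (Fin.snocOrderIso fun _ => α).monotone (Prod.mk_le_mk.2 ⟨hc, hg⟩)

lemma prefixHist_snoc_castSucc (α : Fin (T + 1) → Profile n) (c : Profile n) (t : Fin T) :
    prefixHist (Fin.snoc α c : Fin (T + 2) → Profile n) t.castSucc = prefixHist α t := by
  unfold prefixHist
  congr 1
  funext s
  simp only [Fin.snoc, Fin.val_castLE]
  rw [dif_pos (by omega)]
  rfl

lemma prefixHist_snoc_last (α : Fin (T + 1) → Profile n) (c : Profile n) :
    prefixHist (Fin.snoc α c : Fin (T + 2) → Profile n) (Fin.last T) = ⟨T, α⟩ := by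
  unfold prefixHist
  congr 1
  funext s
  simp only [Fin.snoc, Fin.val_castLE]
  rw [dif_pos (by omega)]
  rfl

lemma pathHist_snoc (P : Rule n) (Uh : Hist n → UtilProfile n) (π : Profile n → ℝ)
    (α : Fin (T + 1) → Profile n) (c : Profile n) :
    pathHist P Uh π (T + 1) (Fin.snoc α c)
      = pathHist P Uh π T α * P (α (Fin.last T)) c (Uh ⟨T, α⟩) := by
  simp only [pathHist, Fin.prod_univ_castSucc, Fin.snoc_castSucc, Fin.succ_castSucc,
    Fin.succ_last, Fin.snoc_last, prefixHist_snoc_castSucc, prefixHist_snoc_last, mul_assoc]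
  rw [← Fin.castSucc_zero, Fin.snoc_castSucc]

lemma pathStatic_snoc (P : Rule n) (Uhat : UtilProfile n) (π : Profile n → ℝ)
    (α : Fin (T + 1) → Profile n) (c : Profile n) :
    pathStatic P Uhat π (T + 1) (Fin.snoc α c)
      = pathStatic P Uhat π T α * P (α (Fin.last T)) c Uhat :=
  pathHist_snoc P (fun _ => Uhat) π α c

end Paths

theorem sum_pathStatic_mul_le_sum_pathHist_mul {n : ℕ} {Pvec : Fin n → Rule n}
    (hP : ∀ i, IsIndividual i (Pvec i) ∧ IsLocalRule i (Pvec i) ∧ IsMonotoneRule i (Pvec i))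
    {Uh : Hist n → UtilProfile n} {Uhat : UtilProfile n} (hA : Aligned Uh Uhat)
    {π : Profile n → ℝ} (hπ : ∀ a, 0 ≤ π a) :
    ∀ (T : ℕ) {φ ψ : (Fin (T + 1) → Profile n) → ℝ}, (∀ α β, α ≤ β → φ α ≤ ψ β) →
      ∑ α, pathStatic (asyncRule Pvec) Uhat π T α * φ α
        ≤ ∑ α, pathHist (asyncRule Pvec) Uh π T α * ψ α
  | 0, φ, ψ, hφψ => sum_le_sum fun α _ => by
      simpa [pathStatic, pathHist] using mul_le_mul_of_nonneg_left (hφψ α α le_rfl) (hπ _)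
  | T + 1, φ, ψ, hφψ => by
      simp only [sum_pi_fin_succ_eq_sum_snoc (m := T + 1), pathStatic_snoc, pathHist_snoc,
        mul_assoc, ← mul_sum]
      refine sum_pathStatic_mul_le_sum_pathHist_mul hP hA hπ T fun g g' hg => ?_
      have hlast := hg (Fin.last T)
      exact asyncRule_sum_mul_le (fun i => (hP i).1) hlast
        (fun i => hA.prob_true_le (hP i).1 (hP i).2.1 (hP i).2.2 ⟨T, g'⟩ hlast)
        fun c c' hc => hφψ _ _ (Fin.snoc_le_snoc hg hc)

theorem upper_set_dominance_general (n : ℕ) (Pvec : Fin n → Rule n)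
    (hP : ∀ i, IsIndividual i (Pvec i) ∧ IsLocalRule i (Pvec i) ∧ IsMonotoneRule i (Pvec i))
    (Uh : Hist n → UtilProfile n) (Uhat : UtilProfile n) (hA : Aligned Uh Uhat)
    (π : Profile n → ℝ) (hπ : IsProb π) (T : ℕ)
    (I : Set (Fin (T + 1) → Profile n)) (hI : IsUpperSet I) :
    ∑ α ∈ Finset.univ.filter (fun α => α ∈ I), pathStatic (asyncRule Pvec) Uhat π T α
      ≤ ∑ α ∈ Finset.univ.filter (fun α => α ∈ I), pathHist (asyncRule Pvec) Uh π T α := by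
  have hmono : ∀ α β, α ≤ β → (if α ∈ I then (1 : ℝ) else 0) ≤ if β ∈ I then 1 else 0 := by
    intro α β hαβ
    by_cases hα : α ∈ I
    · simp [hα, hI hαβ hα]
    · simp only [hα, if_false]
      positivity
  simpa only [sum_filter, mul_boole] using
    sum_pathStatic_mul_le_sum_pathHist_mul hP hA hπ.1 T hmono

/-- For an aligned history-dependent game with a local and monotone asynchronous
learning rule, every upper set of paths has at least as large probability under the
history-dependent path measure as under the static one. -/
theorem upper_set_dominance (n : ℕ) (hn : 1 ≤ n) (Pvec : Fin n → Rule n)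
    (hP : ∀ i, IsIndividual i (Pvec i) ∧ IsLocalRule i (Pvec i) ∧ IsMonotoneRule i (Pvec i))
    (Uh : Hist n → UtilProfile n) (Uhat : UtilProfile n) (hA : Aligned Uh Uhat)
    (π : Profile n → ℝ) (hπ : IsProb π) (T : ℕ)
    (I : Set (Fin (T + 1) → Profile n)) (hI : IsUpperSet I) :
    ∑ α ∈ Finset.univ.filter (fun α => α ∈ I), pathStatic (asyncRule Pvec) Uhat π T α
      ≤ ∑ α ∈ Finset.univ.filter (fun α => α ∈ I), pathHist (asyncRule Pvec) Uh π T α :=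
  upper_set_dominance_general n Pvec hP Uh Uhat hA π hπ T I hI
end

section
/- The reference static CTI sharing game ĝ with utilities Û_i(a) = a_i(−c_i + Σ_{j∈N_i} a_j v̲) is an exact potential game, with potential function φ(a) = Σ_{i∈N} ((1−a_i)c_i + (a_i/2) Σ_{j∈N_i} a_j v̲). -/
open scoped Classical
open Finset

/-- The static game with utilities `U` is an exact potential game with potential `φ`. -/
def IsExactPotential {n : ℕ} (U : UtilProfile n) (φ : Profile n → ℝ) : Prop :=
  ∀ (i : Fin n) (a : Profile n) (b : Bool),
    U i (Function.update a i b) - U i a = φ (Function.update a i b) - φ a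

/-- The CTI sharing utility with cost vector `c` and CTI values `w`:
`U_i(a) = a_i(-c_i + ∑_{j ∈ N_i} a_j w_j)`. -/
noncomputable def ctiUtil {n : ℕ} (G : SimpleGraph (Fin n)) [DecidableRel G.Adj]
    (c : Fin n → ℝ) (w : Fin n → ℝ) : UtilProfile n :=
  fun i a => (if a i then (1 : ℝ) else 0) *
    (-(c i) + ∑ j ∈ G.neighborFinset i, (if a j then w j else 0))

/-- The potential function of the reference static CTI sharing game:
`φ(a) = ∑_i ((1-a_i)c_i + (a_i/2)∑_{j∈N_i} a_j v̲)`. -/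
noncomputable def ctiPot {n : ℕ} (G : SimpleGraph (Fin n)) [DecidableRel G.Adj]
    (c : Fin n → ℝ) (vlow : ℝ) (a : Profile n) : ℝ :=
  ∑ i : Fin n,
    ((1 - if a i then (1 : ℝ) else 0) * c i
      + (if a i then (1 : ℝ) else 0) / 2
          * ∑ j ∈ G.neighborFinset i, (if a j then vlow else 0))

/-!
Write a profile as a 0/1 vector `x` and let `W = v̲ • A` with `A` the adjacency matrix of `G`.
Then `Û_i(x) = x_i (-c_i + (W x)_i)` and `φ(x) = (1 - x) ⬝ c + xᵀ W x / 2`. Because `W` is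
symmetric with zero diagonal, changing `x_i` by `d` changes `xᵀ W x / 2` by `d (W x)_i` and
leaves `(W x)_i` itself unchanged, which is exactly the change in `Û_i`.
-/

open Matrix Function

theorem Matrix.IsSymm.dotProduct_mulVec_add_single {m R : Type*} [Fintype m] [DecidableEq m]
    [CommRing R] {A : Matrix m m R} (hA : A.IsSymm) (x : m → R) (i : m) (d : R) :
    (x + Pi.single i d) ⬝ᵥ A *ᵥ (x + Pi.single i d)
      = x ⬝ᵥ A *ᵥ x + 2 * d * (A *ᵥ x) i + d * d * A i i := by
  have hsymm : x ⬝ᵥ A *ᵥ Pi.single i d = d * (A *ᵥ x) i := by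
    rw [dotProduct_mulVec, ← mulVec_transpose, hA.eq, dotProduct_single, mul_comm]
  have hdiag : (A *ᵥ Pi.single i d) i = A i i * d := by simp
  rw [mulVec_add, dotProduct_add, add_dotProduct, add_dotProduct, single_dotProduct,
    single_dotProduct, hsymm, hdiag]
  ring

theorem Function.update_eq_add_single {m R : Type*} [DecidableEq m] [AddCommGroup R]
    (x : m → R) (i : m) (t : R) : update x i t = x + Pi.single i (t - x i) := by
  ext j
  rcases eq_or_ne j i with rfl | hj <;> simp [*]

section BilinearGame

variable {m R : Type*} [Fintype m] [DecidableEq m] [Field R]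

def bilinearUtil (W : Matrix m m R) (c : m → R) (i : m) (x : m → R) : R :=
  x i * (-c i + (W *ᵥ x) i)

def bilinearPot (W : Matrix m m R) (c : m → R) (x : m → R) : R :=
  (1 - x) ⬝ᵥ c + x ⬝ᵥ W *ᵥ x / 2

variable [NeZero (2 : R)] {W : Matrix m m R}

theorem bilinearPot_update_sub (hW : W.IsSymm) (hdiag : ∀ i, W i i = 0) (c x : m → R)
    (i : m) (t : R) :
    bilinearPot W c (update x i t) - bilinearPot W c x
      = bilinearUtil W c i (update x i t) - bilinearUtil W c i x := by
  have hWx : (W *ᵥ update x i t) i = (W *ᵥ x) i := by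
    rw [update_eq_add_single, mulVec_add]
    simp [hdiag]
  have hquad := hW.dotProduct_mulVec_add_single x i (t - x i)
  rw [hdiag, ← update_eq_add_single] at hquad
  have hlin : (1 - update x i t) ⬝ᵥ c = (1 - x) ⬝ᵥ c - (t - x i) * c i := by
    rw [update_eq_add_single, sub_add_eq_sub_sub, sub_dotProduct, single_dotProduct]
  simp only [bilinearPot, bilinearUtil, hWx, hquad, hlin, update_self]
  field_simp
  ring

end BilinearGame

namespace Profile

variable {n : ℕ}

def toVec (a : Profile n) : Fin n → ℝ := fun j => if a j then 1 else 0

theorem toVec_update (a : Profile n) (i : Fin n) (b : Bool) :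
    toVec (update a i b) = update (toVec a) i (if b then 1 else 0) := by
  ext j
  rcases eq_or_ne j i with rfl | hj <;> simp [toVec, *]

end Profile

section CTI

variable {n : ℕ} (G : SimpleGraph (Fin n)) [DecidableRel G.Adj] (c : Fin n → ℝ) (vlow : ℝ)

theorem sum_neighborFinset_ite_eq_mulVec (a : Profile n) (i : Fin n) :
    ∑ j ∈ G.neighborFinset i, (if a j then vlow else 0)
      = ((vlow • G.adjMatrix ℝ) *ᵥ a.toVec) i := by
  rw [smul_mulVec, Pi.smul_apply, SimpleGraph.adjMatrix_mulVec_apply, smul_eq_mul, mul_sum]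
  simp [Profile.toVec]

theorem ctiUtil_eq_bilinearUtil (i : Fin n) (a : Profile n) :
    ctiUtil G c (fun _ => vlow) i a = bilinearUtil (vlow • G.adjMatrix ℝ) c i a.toVec := by
  rw [ctiUtil, bilinearUtil, sum_neighborFinset_ite_eq_mulVec]
  rfl

theorem ctiPot_eq_bilinearPot (a : Profile n) :
    ctiPot G c vlow a = bilinearPot (vlow • G.adjMatrix ℝ) c a.toVec := by
  simp only [ctiPot, bilinearPot, dotProduct, sum_neighborFinset_ite_eq_mulVec, sum_div,
    ← sum_add_distrib]
  refine sum_congr rfl fun i _ => ?_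
  simp only [Pi.sub_apply, Pi.one_apply, Profile.toVec]
  ring

end CTI

theorem cti_static_exact_potential_general (n : ℕ) (G : SimpleGraph (Fin n)) [DecidableRel G.Adj]
    (c : Fin n → ℝ) (vlow : ℝ) :
    IsExactPotential (ctiUtil G c (fun _ => vlow)) (ctiPot G c vlow) := by
  intro i a b
  have hsymm : (vlow • G.adjMatrix ℝ).IsSymm := G.isSymm_adjMatrix.smul vlow
  have hdiag : ∀ j, (vlow • G.adjMatrix ℝ) j j = 0 := fun j => by simp
  simp only [ctiUtil_eq_bilinearUtil, ctiPot_eq_bilinearPot, Profile.toVec_update]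
  exact (bilinearPot_update_sub hsymm hdiag c a.toVec i _).symm

/-- The reference static CTI sharing game is an exact potential game with potential
`φ(a) = ∑_i ((1-a_i)c_i + (a_i/2)∑_{j∈N_i} a_j v̲)`. -/
theorem cti_static_exact_potential (n : ℕ) (G : SimpleGraph (Fin n)) [DecidableRel G.Adj]
    (c : Fin n → ℝ) (hc : ∀ i, 0 ≤ c i) (vlow : ℝ) :
    IsExactPotential (ctiUtil G c (fun _ => vlow)) (ctiPot G c vlow) :=
  cti_static_exact_potential_general n G c vlow
end

section
/- Let γ, β₁ be reals with 0 < γ ≤ β₁, let β : ℝ → ℝ satisfy β(t) ≥ β₁ for all t, and let S : ℝ → ℝ be differentiable with S'(t) = (1 − S(t))(γ − β(t)S(t)) for all t. If 0 ≤ S(t₀) ≤ γ/β₁ for some t₀, then 0 ≤ S(t) ≤ γ/β₁ for all t ≥ t₀; that is, the interval [0, γ/β₁] is positively invariant for the susceptible-fraction dynamics. -/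
/-!
A differentiable function whose derivative is `≤ 0` wherever it exceeds `c` cannot cross `c`
upwards: after the last time it is `≤ c` it would be antitone. For the SIS field, `S' ≥ 0` where
`S < 0` and `S' ≤ 0` where `γ / β₁ < S ≤ 1`, so both ends of `[0, γ / β₁]` are such barriers.
The remaining point is `S ≤ 1`: while `u = S - 1 > 0` one has `u' ≥ β₁ u²`, so `u⁻¹` decreases at
rate at least `β₁` and `S` would blow up in finite time, although it is defined for all time.
-/

open Set

theorem le_max_of_hasDerivAt_nonpos_of_lt {f f' : ℝ → ℝ} {a b c : ℝ} (hab : a ≤ b)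
    (hf : ContinuousOn f (Icc a b)) (hf' : ∀ t ∈ Ioo a b, HasDerivAt f (f' t) t)
    (hf'_nonpos : ∀ t ∈ Ioo a b, c < f t → f' t ≤ 0) : f b ≤ max (f a) c := by
  by_contra! hb
  set d := max (f a) c
  set A := Icc a b ∩ f ⁻¹' Iic d
  have hAbdd : BddAbove A := ⟨b, fun t ht => ht.1.2⟩
  have hmA : sSup A ∈ A :=
    (hf.preimage_isClosed_of_isClosed isClosed_Icc isClosed_Iic).csSup_mem
      ⟨a, ⟨le_rfl, hab⟩, (le_max_left _ _ : f a ≤ d)⟩ hAbdd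
  set m := sSup A
  have habove : ∀ t ∈ Ioc m b, d < f t := fun t ht => by
    by_contra! h
    exact (le_csSup hAbdd ⟨⟨hmA.1.1.trans ht.1.le, ht.2⟩, h⟩).not_gt ht.1
  have hanti : AntitoneOn f (Icc m b) := by
    refine antitoneOn_of_hasDerivWithinAt_nonpos (f' := f') (convex_Icc m b)
      (hf.mono (Icc_subset_Icc_left hmA.1.1)) (fun t ht => ?_) (fun t ht => ?_)
    · rw [interior_Icc] at ht
      exact (hf' t ⟨hmA.1.1.trans_lt ht.1, ht.2⟩).hasDerivWithinAt
    · rw [interior_Icc] at ht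
      exact hf'_nonpos t ⟨hmA.1.1.trans_lt ht.1, ht.2⟩
        ((le_max_right _ _).trans_lt (habove t ⟨ht.1, ht.2.le⟩))
  have hmb : m ≤ b := hmA.1.2
  exact ((hanti ⟨le_rfl, hmb⟩ ⟨hmb, le_rfl⟩ hmb).trans hmA.2).not_gt hb

theorem le_max_of_hasDerivAt_nonneg_of_lt {f f' : ℝ → ℝ} {a b c : ℝ} (hab : a ≤ b)
    (hf : ContinuousOn f (Icc a b)) (hf' : ∀ t ∈ Ioo a b, HasDerivAt f (f' t) t)
    (hf'_nonneg : ∀ t ∈ Ioo a b, c < f t → 0 ≤ f' t) : f a ≤ max (f b) c := by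
  have hmem : ∀ t ∈ Ioo a b, a + b - t ∈ Ioo a b := fun t ht =>
    ⟨by linarith [ht.2], by linarith [ht.1]⟩
  have := le_max_of_hasDerivAt_nonpos_of_lt (f := fun t => f (a + b - t))
    (f' := fun t => -f' (a + b - t)) hab
    (hf.comp (by fun_prop) fun t ht => ⟨by linarith [ht.2], by linarith [ht.1]⟩)
    (fun t ht => (hf' _ (hmem t ht)).comp_const_sub (a + b) t)
    (fun t ht hc => neg_nonpos.2 (hf'_nonneg _ (hmem t ht) hc))
  simpa only [add_sub_cancel_right, add_sub_cancel_left] using this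

theorem nonpos_of_sq_le_deriv {u u' : ℝ → ℝ} {k a : ℝ} (hk : 0 < k)
    (hu : ∀ t ∈ Ici a, HasDerivAt u (u' t) t)
    (hsq : ∀ t ∈ Ici a, 0 < u t → k * u t ^ 2 ≤ u' t) : u a ≤ 0 := by
  by_contra! ha
  have hpos : ∀ t ∈ Ici a, 0 < u t := fun t ht => by
    have := le_max_of_hasDerivAt_nonneg_of_lt ht
      (fun s hs => (hu s hs.1).continuousAt.continuousWithinAt) (fun s hs => hu s hs.1.le)
      fun s hs hus => (by positivity : 0 ≤ k * u s ^ 2).trans (hsq s hs.1.le hus)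
    rcases le_max_iff.1 this with h | h <;> linarith
  have hderiv : ∀ t ∈ Ici a,
      HasDerivAt (fun s => (u s)⁻¹ + k * s) (-u' t / u t ^ 2 + k) t := fun t ht =>
    (((hu t ht).inv (hpos t ht).ne').add ((hasDerivAt_id t).const_mul k)).congr_deriv
      (by rw [mul_one])
  have hanti : AntitoneOn (fun s => (u s)⁻¹ + k * s) (Ici a) := by
    refine antitoneOn_of_hasDerivWithinAt_nonpos (convex_Ici a)
      (fun t ht => (hderiv t ht).continuousAt.continuousWithinAt)
      (fun t ht => (hderiv t (interior_subset ht)).hasDerivWithinAt) fun t ht => ?_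
    have ht : t ∈ Ici a := interior_subset ht
    have hsq_pos : 0 < u t ^ 2 := pow_pos (hpos t ht) 2
    rw [neg_div, neg_add_nonpos_iff, le_div_iff₀ hsq_pos]
    exact hsq t ht (hpos t ht)
  -- the bound `(u t)⁻¹ ≤ (u a)⁻¹ - k * (t - a)` reaches zero at `T`
  set T := a + (u a)⁻¹ / k
  have hT : a ≤ T := le_add_of_nonneg_right (by positivity)
  have hdrop : (u T)⁻¹ + k * T ≤ (u a)⁻¹ + k * a := hanti self_mem_Ici hT hT
  have hkT : k * T = k * a + (u a)⁻¹ := by simp only [T]; field_simp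
  linarith [inv_pos.2 (hpos T hT)]

section SIS

variable {γ β₁ : ℝ} {β S : ℝ → ℝ}

theorem sis_le_one (hβ₁ : 0 < β₁) (hγβ : γ ≤ β₁) (hβ : ∀ t, β₁ ≤ β t)
    (hS : ∀ t, HasDerivAt S ((1 - S t) * (γ - β t * S t)) t) (t : ℝ) : S t ≤ 1 := by
  suffices S t - 1 ≤ 0 by linarith
  refine nonpos_of_sq_le_deriv (u := fun s => S s - 1) hβ₁ (fun s _ => (hS s).sub_const 1)
    fun s _ hs => ?_
  have hgap : β₁ * (S s - 1) ≤ β s * S s - γ := by nlinarith [hβ s]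
  calc β₁ * (S s - 1) ^ 2 = (S s - 1) * (β₁ * (S s - 1)) := by ring
    _ ≤ (S s - 1) * (β s * S s - γ) := mul_le_mul_of_nonneg_left hgap hs.le
    _ = (1 - S s) * (γ - β s * S s) := by ring

theorem sis_nonneg_of_nonneg (hγ : 0 ≤ γ) (hβ₁ : 0 ≤ β₁) (hβ : ∀ t, β₁ ≤ β t)
    (hS : ∀ t, HasDerivAt S ((1 - S t) * (γ - β t * S t)) t) {t₀ t : ℝ} (ht : t₀ ≤ t)
    (h0 : 0 ≤ S t₀) : 0 ≤ S t := by
  have hScont : Continuous S := continuous_iff_continuousAt.2 fun s => (hS s).continuousAt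
  have := le_max_of_hasDerivAt_nonpos_of_lt (f := fun s => -S s) (c := 0) ht
    hScont.neg.continuousOn (fun s _ => (hS s).neg) fun s _ hs => ?_
  · simpa [h0] using this
  · have : 0 ≤ β s := hβ₁.trans (hβ s)
    exact neg_nonpos.2 (mul_nonneg (by linarith) (by nlinarith))

theorem sis_le_div_of_le_div (hγ : 0 ≤ γ) (hβ₁ : 0 < β₁) (hγβ : γ ≤ β₁) (hβ : ∀ t, β₁ ≤ β t)
    (hS : ∀ t, HasDerivAt S ((1 - S t) * (γ - β t * S t)) t) {t₀ t : ℝ} (ht : t₀ ≤ t)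
    (h1 : S t₀ ≤ γ / β₁) : S t ≤ γ / β₁ := by
  have hScont : Continuous S := continuous_iff_continuousAt.2 fun s => (hS s).continuousAt
  have := le_max_of_hasDerivAt_nonpos_of_lt (c := γ / β₁) ht hScont.continuousOn (fun s _ => hS s)
    fun s _ hs => ?_
  · simpa [h1] using this
  · have hS_nonneg : 0 ≤ S s := (div_nonneg hγ hβ₁.le).trans hs.le
    have : γ < β₁ * S s := (div_lt_iff₀' hβ₁).1 hs
    exact mul_nonpos_of_nonneg_of_nonpos (sub_nonneg.2 (sis_le_one hβ₁ hγβ hβ hS s))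
      (by nlinarith [hβ s])

end SIS

/-- SIS positive invariance: if `0 < γ ≤ β₁`, `β(t) ≥ β₁` for all `t`, and
`S' = (1 - S)(γ - β(t)S)`, then the interval `[0, γ/β₁]` is positively invariant:
once `S(t₀) ∈ [0, γ/β₁]`, we have `S(t) ∈ [0, γ/β₁]` for all `t ≥ t₀`. -/
theorem sis_positively_invariant (γ β₁ : ℝ) (hγ : 0 < γ) (hγβ : γ ≤ β₁)
    (β S : ℝ → ℝ) (hβ : ∀ t, β₁ ≤ β t)
    (hS : ∀ t, HasDerivAt S ((1 - S t) * (γ - β t * S t)) t)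
    (t₀ : ℝ) (h0 : 0 ≤ S t₀) (h1 : S t₀ ≤ γ / β₁) :
    ∀ t, t₀ ≤ t → 0 ≤ S t ∧ S t ≤ γ / β₁ := by
  have hβ₁ : 0 < β₁ := hγ.trans_le hγβ
  exact fun t ht => ⟨sis_nonneg_of_nonneg hγ.le hβ₁.le hβ hS ht h0,
    sis_le_div_of_le_div hγ.le hβ₁ hγβ hβ hS ht h1⟩
end
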